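/- For any l ∈ ℕ, any vertex set V with l+1 elements and any balanced tree G ∈ T_V, every edge of G joins a black vertex and a white vertex; that is, for every edge of G exactly one of its two endpoints lies in B(G). -/

import Mathlib

/-! Circuit multigraphs are encoded by their routes: a circuit multigraph on a
vertex set `V ⊆ ℕ` with `N` linearly ordered edges is uniquely determined by its
route, a list `r : List ℕ` of length `N` whose entries cover `V`; the `j`-th edge
(0-indexed) goes from `r[j]` to `r[(j+1) % N]`. -/

/-- The tail of the `j`-th edge of the circuit multigraph with route `r`. -/
def edgeTail (r : List ℕ) (j : ℕ) : ℕ := r.getD (j % r.length) 0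

/-- The head of the `j`-th edge of the circuit multigraph with route `r`. -/
def edgeHead (r : List ℕ) (j : ℕ) : ℕ := r.getD ((j + 1) % r.length) 0

/-- A circuit multigraph is balanced if its edges can be partitioned into pairs
`(e, e')` such that the head of `e` is the tail of `e'` and vice versa.  We encode
the pairing by a fixed-point-free involution on the edge indices. -/
def IsBalanced (r : List ℕ) : Prop :=
  ∃ σ : Equiv.Perm (Fin r.length), ∀ k : Fin r.length,
    σ k ≠ k ∧ σ (σ k) = k ∧
    edgeHead r k = edgeTail r (σ k) ∧ edgeHead r (σ k) = edgeTail r k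

/-- The set of black vertices of the circuit multigraph with route `r`: the vertices
occurring at an odd-numbered (1-based) position of the route, i.e. at an even
0-based index. -/
def blackFinset (r : List ℕ) : Finset ℕ :=
  (((List.range r.length).filter (fun j => j % 2 = 0)).map (fun j => r.getD j 0)).toFinset

/-! A vertex `v` of a balanced tree with route `r` is visited only at positions of the parity
of its first visit `r.idxOf v`.  Each of the `l` vertices other than `r[0]` is discovered by an
edge `j - 1 → j` with `j = r.idxOf r[j]`; its partner in the balancing starts at `r[j]`, hence
not before position `j`.  So the `l` discovery edges and their `l` partners are pairwise
distinct and exhaust the `2 * l` edges.  Going along the route, a discovery edge enters a new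
vertex at its first visit, and the partner of the discovery edge `j - 1 → j` is traversed from
`r[j]` back to `r[j - 1]`, both seen before; either way the parity of the first visit of the
current vertex flips at every step. -/

open Finset

theorem List.idxOf_getElem_le {α : Type*} [BEq α] [ReflBEq α] (r : List α) {j : ℕ}
    (hj : j < r.length) : r.idxOf r[j] ≤ j :=
  Nat.le_of_not_lt fun h => by simpa using List.not_of_lt_findIdx h

section Route

variable {r : List ℕ}

theorem edgeHead_eq_edgeTail_succ (r : List ℕ) (k : ℕ) : edgeHead r k = edgeTail r (k + 1) :=
  rfl

theorem edgeTail_of_lt {k : ℕ} (hk : k < r.length) : edgeTail r k = r[k] := by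
  rw [edgeTail, Nat.mod_eq_of_lt hk, List.getD_eq_getElem]

theorem edgeTail_mem (hr : r ≠ []) (k : ℕ) : edgeTail r k ∈ r := by
  have hk := Nat.mod_lt k (List.length_pos_iff.2 hr)
  rw [edgeTail, List.getD_eq_getElem _ _ hk]
  exact List.getElem_mem hk

theorem edgeTail_mod_length (r : List ℕ) (k : ℕ) :
    edgeTail r (k % r.length) = edgeTail r k := by
  rw [edgeTail, edgeTail, Nat.mod_mod]

theorem idxOf_edgeTail_le {k : ℕ} (hk : k < r.length) : r.idxOf (edgeTail r k) ≤ k := by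
  rw [edgeTail_of_lt hk]
  exact r.idxOf_getElem_le hk

theorem edgeTail_idxOf {v : ℕ} (hv : v ∈ r) : edgeTail r (r.idxOf v) = v := by
  have hlt := List.idxOf_lt_length_iff.2 hv
  rw [edgeTail_of_lt hlt, List.getElem_idxOf hlt]

theorem mem_blackFinset {v : ℕ} :
    v ∈ blackFinset r ↔ ∃ j < r.length, j % 2 = 0 ∧ edgeTail r j = v := by
  simp only [blackFinset, List.mem_toFinset, List.mem_map, List.mem_filter, List.mem_range,
    decide_eq_true_eq, and_assoc]
  refine exists_congr fun j => and_congr_right fun hj => ?_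
  rw [edgeTail_of_lt hj, List.getD_eq_getElem]

def firstVisits (r : List ℕ) : Finset ℕ := r.toFinset.image r.idxOf

theorem card_firstVisits (r : List ℕ) : (firstVisits r).card = r.toFinset.card :=
  card_image_of_injOn fun _ hv _ _ h => (List.idxOf_inj (List.mem_toFinset.1 hv)).1 h

theorem mem_firstVisits {j : ℕ} :
    j ∈ firstVisits r ↔ j < r.length ∧ r.idxOf (edgeTail r j) = j := by
  constructor
  · intro h
    obtain ⟨v, hv, rfl⟩ := mem_image.1 h
    have hv := List.mem_toFinset.1 hv
    exact ⟨List.idxOf_lt_length_iff.2 hv, by rw [edgeTail_idxOf hv]⟩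
  · rintro ⟨hj, hidx⟩
    refine mem_image.2 ⟨edgeTail r j, List.mem_toFinset.2 (edgeTail_mem ?_ j), hidx⟩
    exact List.ne_nil_of_length_pos (by omega)

theorem zero_mem_firstVisits (hr : r ≠ []) : 0 ∈ firstVisits r := by
  have hpos := List.length_pos_iff.2 hr
  exact mem_firstVisits.2 ⟨hpos, Nat.le_zero.1 (idxOf_edgeTail_le hpos)⟩

def discoveries (r : List ℕ) : Finset ℕ := (firstVisits r).erase 0

theorem mem_discoveries {j : ℕ} :
    j ∈ discoveries r ↔ j ≠ 0 ∧ j < r.length ∧ r.idxOf (edgeTail r j) = j := by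
  rw [discoveries, mem_erase, mem_firstVisits]

theorem card_discoveries (hr : r ≠ []) : (discoveries r).card = r.toFinset.card - 1 := by
  rw [discoveries, card_erase_of_mem (zero_mem_firstVisits hr), card_firstVisits]

end Route

/-- The pairing of `IsBalanced` as a function on `ℕ`, whose values beyond `r.length` do not
matter; `edgeTail r (k + 1)` is the head of the edge `k`. -/
structure IsEdgePairing (r : List ℕ) (s : ℕ → ℕ) : Prop where
  lt_length : ∀ k < r.length, s k < r.length
  involutive : ∀ k < r.length, s (s k) = k
  head_eq_tail : ∀ k < r.length, edgeTail r (k + 1) = edgeTail r (s k)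
  tail_eq_head : ∀ k < r.length, edgeTail r k = edgeTail r (s k + 1)

theorem IsBalanced.exists_isEdgePairing {r : List ℕ} (h : IsBalanced r) :
    ∃ s, IsEdgePairing r s := by
  obtain ⟨σ, hσ⟩ := h
  refine ⟨fun k => if hk : k < r.length then σ ⟨k, hk⟩ else k, ?_, ?_, ?_, ?_⟩ <;>
    intro k hk
  · simp [hk]
  · simp [hk, (hσ ⟨k, hk⟩).2.1]
  · simpa [hk, edgeHead, edgeTail, Nat.mod_eq_of_lt] using (hσ ⟨k, hk⟩).2.2.1
  · simpa [hk, edgeHead, edgeTail, Nat.mod_eq_of_lt hk] using (hσ ⟨k, hk⟩).2.2.2.symm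

namespace IsEdgePairing

variable {r : List ℕ} {s : ℕ → ℕ}

theorem le_pair_pred (hs : IsEdgePairing r s) {j : ℕ} (hj : j ∈ discoveries r) :
    j ≤ s (j - 1) := by
  obtain ⟨hj0, hjlen, hfirst⟩ := mem_discoveries.1 hj
  have hpred : j - 1 < r.length := by omega
  have hhead : edgeTail r j = edgeTail r (s (j - 1)) := by
    rw [← hs.head_eq_tail _ hpred, Nat.sub_add_cancel (Nat.one_le_iff_ne_zero.2 hj0)]
  calc j = r.idxOf (edgeTail r (s (j - 1))) := by rw [← hhead, hfirst]
    _ ≤ s (j - 1) := idxOf_edgeTail_le (hs.lt_length _ hpred)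

theorem disjoint_image_pred_image_pair_pred (hs : IsEdgePairing r s) :
    Disjoint ((discoveries r).image (· - 1)) ((discoveries r).image fun j => s (j - 1)) := by
  simp only [disjoint_left, mem_image, not_exists, not_and]
  rintro _ ⟨j, hj, rfl⟩ j' hj' hpair
  obtain ⟨hj'0, hj'len, -⟩ := mem_discoveries.1 hj'
  have hle := hs.le_pair_pred hj
  have hle' := hs.le_pair_pred hj'
  rw [← hpair, hs.involutive _ (by omega)] at hle
  omega

theorem image_pred_union_image_pair_pred (hs : IsEdgePairing r s) {l : ℕ}
    (hlen : r.length = 2 * l) (hcard : r.toFinset.card = l + 1) :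
    (discoveries r).image (· - 1) ∪ (discoveries r).image (fun j => s (j - 1))
      = range r.length := by
  have hD : ∀ j ∈ discoveries r, j ≠ 0 ∧ j < r.length := fun j hj =>
    ⟨(mem_discoveries.1 hj).1, (mem_discoveries.1 hj).2.1⟩
  have hpred_inj : Set.InjOn (· - 1) (discoveries r : Set ℕ) :=
    fun a ha b hb (hab : a - 1 = b - 1) => by
      have := hD a ha; have := hD b hb; omega
  have hpair_inj : Set.InjOn (fun j => s (j - 1)) (discoveries r : Set ℕ) :=
    fun a ha b hb hab => by
      have h := congrArg s hab
      have := hD a ha; have := hD b hb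
      simp only [hs.involutive _ (by omega : a - 1 < r.length),
        hs.involutive _ (by omega : b - 1 < r.length)] at h
      omega
  refine eq_of_subset_of_card_le (fun k hk => ?_) ?_
  · simp only [mem_union, mem_image, mem_range] at hk ⊢
    rcases hk with ⟨j, hj, rfl⟩ | ⟨j, hj, rfl⟩
    · have := hD j hj; omega
    · exact hs.lt_length _ (by have := hD j hj; omega)
  · have hr : r ≠ [] := by rintro rfl; simp at hcard
    rw [card_range, card_union_of_disjoint hs.disjoint_image_pred_image_pair_pred,
      card_image_of_injOn hpred_inj, card_image_of_injOn hpair_inj, card_discoveries hr, hcard,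
      hlen]
    omega

theorem idxOf_edgeTail_mod_two_of_lt (hs : IsEdgePairing r s) {l : ℕ}
    (hlen : r.length = 2 * l) (hcard : r.toFinset.card = l + 1) {m : ℕ} (hm : m < r.length) :
    r.idxOf (edgeTail r m) % 2 = m % 2 := by
  induction m using Nat.strong_induction_on with
  | _ m ih =>
  cases m with
  | zero => rw [Nat.le_zero.1 (idxOf_edgeTail_le hm)]
  | succ n =>
  have hn : n ∈ range r.length := mem_range.2 (by omega)
  rw [← hs.image_pred_union_image_pair_pred hlen hcard] at hn
  simp only [mem_union, mem_image] at hn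
  obtain ⟨j, hj, hjn⟩ | ⟨j, hj, hjn⟩ := hn
  all_goals
    obtain ⟨hj0, hjlen, hfirst⟩ := mem_discoveries.1 hj
    have hsucc : j - 1 + 1 = j := by omega
    subst hjn
  · rw [hsucc, hfirst]
  -- the step `n → n + 1` retraces the discovery edge `j - 1 → j` backwards
  · have hpred : j - 1 < r.length := by omega
    have hcur := ih _ (by omega) (hs.lt_length _ hpred)
    have hprev := ih _ (by have := hs.le_pair_pred hj; omega) hpred
    rw [← hs.head_eq_tail _ hpred, hsucc, hfirst] at hcur
    rw [← hs.tail_eq_head _ hpred, hprev]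
    omega

theorem idxOf_edgeTail_mod_two (hs : IsEdgePairing r s) {l : ℕ}
    (hlen : r.length = 2 * l) (hcard : r.toFinset.card = l + 1) (m : ℕ) :
    r.idxOf (edgeTail r m) % 2 = m % 2 := by
  have hr : r ≠ [] := by rintro rfl; simp at hcard
  rw [← edgeTail_mod_length,
    hs.idxOf_edgeTail_mod_two_of_lt hlen hcard (Nat.mod_lt _ (List.length_pos_iff.2 hr)),
    Nat.mod_mod_of_dvd _ (by rw [hlen]; exact dvd_mul_right 2 l)]

end IsEdgePairing

theorem mem_blackFinset_iff_of_parity {r : List ℕ}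
    (hpar : ∀ m, r.idxOf (edgeTail r m) % 2 = m % 2) {v : ℕ} (hv : v ∈ r) :
    v ∈ blackFinset r ↔ r.idxOf v % 2 = 0 := by
  rw [mem_blackFinset]
  constructor
  · rintro ⟨j, -, hj, rfl⟩
    rw [hpar, hj]
  · intro hv2
    exact ⟨_, List.idxOf_lt_length_iff.2 hv, hv2, edgeTail_idxOf hv⟩

/-- **Lemma** (coloring of balanced trees).  For a balanced tree on a vertex set `V`
with `l+1` elements (a balanced circuit multigraph with `2l` edges whose route covers
`V`), every edge joins a black and a white vertex: exactly one endpoint of each edge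
lies in the black set. -/
theorem balancedTree_edge_black_white (l : ℕ) (V : Finset ℕ) (hV : V.card = l + 1)
    (r : List ℕ) (hlen : r.length = 2 * l) (hcov : r.toFinset = V)
    (hbal : IsBalanced r) :
    ∀ j < r.length, (edgeTail r j ∈ blackFinset r ↔ edgeHead r j ∉ blackFinset r) := by
  intro j hj
  obtain ⟨s, hs⟩ := hbal.exists_isEdgePairing
  have hpar := hs.idxOf_edgeTail_mod_two hlen (by rw [hcov, hV])
  have hr : r ≠ [] := List.ne_nil_of_length_pos (by omega)
  rw [edgeHead_eq_edgeTail_succ, mem_blackFinset_iff_of_parity hpar (edgeTail_mem hr _),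
    mem_blackFinset_iff_of_parity hpar (edgeTail_mem hr _), hpar, hpar]
  omega
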